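/- Let a, b, a', b' be positive real numbers with a·b' > a'·b. For t : ℝ, define A t ↔ a·t > b·(1 − t) and B t ↔ a'·t > b'·(1 − t). Then 0 < b/(a+b) < b'/(a'+b') < 1, and for every real t, A t ≠ B t if and only if t ∈ Set.Ioc (b/(a+b)) (b'/(a'+b')); that is, the two decision rules disagree exactly on the nonempty half-open interval (b/(a+b), b'/(a'+b')] and agree everywhere else. -/

import Mathlib

/-! Each rule is a threshold rule: `b * (1 - t) < a * t` holds exactly when `t` exceeds
`b / (a + b)`, and `a * b' > a' * b` says that A's threshold lies strictly below B's.
Two threshold rules disagree exactly between their thresholds. -/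

section ThresholdRule

variable {K : Type*} [Field K] [LinearOrder K] [IsStrictOrderedRing K]

theorem mul_one_sub_lt_mul_iff_div_add_lt {a b : K} (hab : 0 < a + b) (t : K) :
    b * (1 - t) < a * t ↔ b / (a + b) < t := by
  rw [div_lt_iff₀ hab]
  constructor <;> intro h <;> linarith

theorem div_add_lt_div_add_iff {a b a' b' : K} (hab : 0 < a + b) (hab' : 0 < a' + b') :
    b / (a + b) < b' / (a' + b') ↔ a' * b < a * b' := by
  rw [div_lt_div_iff₀ hab hab']
  constructor <;> intro h <;> linarith

end ThresholdRule

theorem lt_ne_lt_iff_mem_Ioc {α : Type*} [LinearOrder α] {p q : α} (hpq : p ≤ q) (t : α) :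
    ((p < t) ≠ (q < t)) ↔ t ∈ Set.Ioc p q := by
  rw [ne_eq, eq_iff_iff, Set.mem_Ioc, ← not_lt]
  by_cases hp : p < t
  · simp [hp]
  · have hq : ¬q < t := fun hq => hp (hpq.trans_lt hq)
    simp [hp, hq]

/-- Bounded empathy: two agents with private weightings `(a, b)` and `(a', b')`
of the two axes, the first injury-leaning relative to the second (`a·b' > a'·b`),
license actions by threshold rules `A t ↔ a·t > b·(1−t)` and
`B t ↔ a'·t > b'·(1−t)` on content `(t, 1−t)`. The two rules disagree exactly on
the nonempty half-open band `(b/(a+b), b'/(a'+b')]` and agree everywhere else. -/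
theorem bounded_empathy_disagreement_band
    (a b a' b' : ℝ) (ha : 0 < a) (hb : 0 < b) (ha' : 0 < a') (hb' : 0 < b')
    (hlean : a * b' > a' * b) :
    (0 < b / (a + b) ∧ b / (a + b) < b' / (a' + b') ∧ b' / (a' + b') < 1) ∧
    ∀ t : ℝ,
      ((a * t > b * (1 - t)) ≠ (a' * t > b' * (1 - t)))
        ↔ t ∈ Set.Ioc (b / (a + b)) (b' / (a' + b')) := by
  have hab : 0 < a + b := by positivity
  have hab' : 0 < a' + b' := by positivity
  have hlt : b / (a + b) < b' / (a' + b') := (div_add_lt_div_add_iff hab hab').2 hlean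
  refine ⟨⟨by positivity, hlt, (div_lt_one hab').2 (by linarith)⟩, fun t => ?_⟩
  simp only [gt_iff_lt, mul_one_sub_lt_mul_iff_div_add_lt hab,
    mul_one_sub_lt_mul_iff_div_add_lt hab']
  exact lt_ne_lt_iff_mem_Ioc hlt.le t
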